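/- arXiv:2307.04417 — 2 statements merged into one kernel-verified Lean document; each statement's English description precedes it below -/
import Mathlib

section
/- If h : ℝ^d → ℝ is μ-PL (i.e., (1/2)‖∇h(w)‖² ≥ μ(h(w) - inf h) for all w) and L-smooth, then for any w, with w* the projection of w onto the solution set argmin h, ‖w - w*‖² ≤ (2/μ)(h(w) - h(w*)) (PL implies quadratic growth). -/
open Metric InnerProductSpace

local notation "⟪" x ", " y "⟫" => @inner ℝ _ _ x y

lemma fderiv_eq_inner_gradient {F : Type*} [NormedAddCommGroup F] [InnerProductSpace ℝ F]
    [CompleteSpace F] (h : F → ℝ) (y u : F) :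
    fderiv ℝ h y u = ⟪gradient h y, u⟫ := by
  have : fderiv ℝ h y = toDual ℝ F (gradient h y) :=
    ((toDual ℝ F).apply_symm_apply _).symm
  rw [this, toDual_apply_apply]

lemma smooth_upper_bound {F : Type*} [NormedAddCommGroup F] [InnerProductSpace ℝ F]
    [CompleteSpace F] {h : F → ℝ} {L : ℝ} (hL : 0 < L)
    (hdiff : Differentiable ℝ h)
    (hsmooth : LipschitzWith (Real.toNNReal L) (gradient h)) (x u : F) :
    h (x + u) ≤ h x + ⟪gradient h x, u⟫ + L / 2 * ‖u‖ ^ 2 := by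
  set ψ : ℝ → ℝ := fun t => h (x + t • u) - ⟪gradient h x, u⟫ * t - L / 2 * ‖u‖ ^ 2 * t ^ 2 with hψ
  have hline : ∀ t : ℝ, HasDerivAt (fun s : ℝ => x + s • u) u t := fun t => by
    simpa using ((hasDerivAt_id t).smul_const u).const_add x
  have hcomp : ∀ t : ℝ, HasDerivAt (fun s : ℝ => h (x + s • u)) ⟪gradient h (x + t • u), u⟫ t := by
    intro t
    have := (hdiff (x + t • u)).hasFDerivAt.comp_hasDerivAt t (hline t)
    rwa [fderiv_eq_inner_gradient] at this
  have hψd : ∀ t : ℝ, HasDerivAt ψ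
      (⟪gradient h (x + t • u), u⟫ - ⟪gradient h x, u⟫ - L / 2 * ‖u‖ ^ 2 * (2 * t)) t := by
    intro t
    have h2 : HasDerivAt (fun t : ℝ => ⟪gradient h x, u⟫ * t) ⟪gradient h x, u⟫ t := by
      simpa using (hasDerivAt_id t).const_mul ⟪gradient h x, u⟫
    have h3 : HasDerivAt (fun t : ℝ => L / 2 * ‖u‖ ^ 2 * t ^ 2) (L / 2 * ‖u‖ ^ 2 * (2 * t)) t := by
      simpa using (hasDerivAt_pow 2 t).const_mul (L / 2 * ‖u‖ ^ 2)
    exact ((hcomp t).sub h2).sub h3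
  have hanti : AntitoneOn ψ (Set.Icc (0:ℝ) 1) := by
    apply antitoneOn_of_deriv_nonpos (convex_Icc 0 1)
    · exact fun t _ => ((hψd t).continuousAt).continuousWithinAt
    · exact fun t _ => ((hψd t).differentiableAt).differentiableWithinAt
    · intro t ht
      rw [interior_Icc] at ht
      rw [(hψd t).deriv]
      have hinner : ⟪gradient h (x + t • u), u⟫ - ⟪gradient h x, u⟫
          = ⟪gradient h (x + t • u) - gradient h x, u⟫ := (inner_sub_left _ _ _).symm
      have hcs : ⟪gradient h (x + t • u) - gradient h x, u⟫
          ≤ ‖gradient h (x + t • u) - gradient h x‖ * ‖u‖ := real_inner_le_norm _ _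
      have hlip : ‖gradient h (x + t • u) - gradient h x‖ ≤ L * (t * ‖u‖) := by
        have := hsmooth.dist_le_mul (x + t • u) x
        rw [dist_eq_norm, dist_eq_norm] at this
        have heq : x + t • u - x = t • u := by abel
        rw [heq] at this
        rw [Real.coe_toNNReal L hL.le] at this
        calc ‖gradient h (x + t • u) - gradient h x‖ ≤ L * ‖t • u‖ := this
          _ = L * (t * ‖u‖) := by rw [norm_smul, Real.norm_eq_abs, abs_of_pos ht.1]
      have hu : (0:ℝ) ≤ ‖u‖ := norm_nonneg u
      nlinarith [hcs, hlip, hinner, mul_nonneg hu hu]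
  have := hanti (Set.left_mem_Icc.mpr zero_le_one) (Set.right_mem_Icc.mpr zero_le_one) zero_le_one
  simp only [hψ, zero_smul, add_zero, one_smul, mul_zero, mul_one, one_pow, zero_pow,
    sub_zero, ne_eq, OfNat.ofNat_ne_zero, not_false_eq_true] at this
  linarith

lemma one_step {F : Type*} [NormedAddCommGroup F] [InnerProductSpace ℝ F]
    [CompleteSpace F] {h : F → ℝ} {L : ℝ} (hL : 0 < L)
    (hdiff : Differentiable ℝ h)
    (hsmooth : LipschitzWith (Real.toNNReal L) (gradient h)) (x : F) (η : ℝ) :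
    h (x - η • gradient h x) ≤ h x - η * (1 - L * η / 2) * ‖gradient h x‖ ^ 2 := by
  have := smooth_upper_bound hL hdiff hsmooth x (-(η • gradient h x))
  rw [← sub_eq_add_neg] at this
  have h1 : ⟪gradient h x, -(η • gradient h x)⟫ = -(η * ‖gradient h x‖ ^ 2) := by
    rw [inner_neg_right, real_inner_smul_right, real_inner_self_eq_norm_sq]
  have h2 : ‖-(η • gradient h x)‖ ^ 2 = η ^ 2 * ‖gradient h x‖ ^ 2 := by
    rw [norm_neg, norm_smul, Real.norm_eq_abs, mul_pow, sq_abs]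
  rw [h1, h2] at this
  nlinarith [this]

set_option maxHeartbeats 1000000 in
/-- PL implies quadratic growth: if `h` is continuously differentiable, `L`-smooth
(Lipschitz gradient), bounded below with attained infimum, and satisfies the `μ`-PL
condition, then `h w - inf h ≥ (μ/2) · dist(w, S)²` where `S` is the set of minimizers. -/
theorem pl_implies_quadratic_growth {d : ℕ}
    (h : EuclideanSpace ℝ (Fin d) → ℝ) (μ L : ℝ) (hμ : 0 < μ) (hL : 0 < L)
    (hcd : ContDiff ℝ 1 h)
    (hbdd : BddBelow (Set.range h))
    (hattain : ∃ w, h w = ⨅ w', h w')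
    (hsmooth : LipschitzWith (Real.toNNReal L) (gradient h))
    (hPL : ∀ w, μ * (h w - ⨅ w', h w') ≤ (1 / 2) * ‖gradient h w‖ ^ 2) :
    ∀ w, (μ / 2) * (Metric.infDist w {w' | h w' = ⨅ w'', h w''}) ^ 2 ≤ h w - ⨅ w', h w' := by
  intro w
  have hdiff : Differentiable ℝ h := hcd.differentiable one_ne_zero
  set m : ℝ := ⨅ w', h w' with hm
  set S : Set (EuclideanSpace ℝ (Fin d)) := {w' | h w' = m} with hS
  have hlow : ∀ u, m ≤ h u := fun u => ciInf_le hbdd u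
  have hs : (0:ℝ) < Real.sqrt (2 * μ) := Real.sqrt_pos.mpr (by linarith)
  have hs2 : Real.sqrt (2 * μ) ^ 2 = 2 * μ := Real.sq_sqrt (by linarith)
  have key : ∀ η : ℝ, 0 < η → L * η ≤ 1 → 2 * μ * η ≤ 1 →
      Metric.infDist w S ≤ 2 / ((1 - L * η / 2) * Real.sqrt (2 * μ)) * Real.sqrt (h w - m) := by
    intro η hη hηL hημ
    set g := gradient h with hg
    set T : EuclideanSpace ℝ (Fin d) → EuclideanSpace ℝ (Fin d) := fun x => x - η • g x with hT
    set c : ℝ := η * (1 - L * η / 2) with hc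
    have hfac : (0:ℝ) < 1 - L * η / 2 := by nlinarith
    have hcpos : 0 < c := mul_pos hη hfac
    have hcη : c ≤ η := by rw [hc]; nlinarith [mul_nonneg (mul_nonneg hL.le hη.le) hη.le]
    set K : ℝ := 2 / ((1 - L * η / 2) * Real.sqrt (2 * μ)) with hK
    have hKpos : 0 < K := by positivity
    have onestep : ∀ x, h (T x) ≤ h x - c * ‖g x‖ ^ 2 := by
      intro x
      have := one_step hL hdiff hsmooth x η
      simp only [hT, hc, hg]
      linarith [this]
    have stepdist : ∀ x, η * ‖g x‖ ≤ K * (Real.sqrt (h x - m) - Real.sqrt (h (T x) - m)) := by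
      intro x
      set G := ‖g x‖ with hG
      have hG0 : 0 ≤ G := norm_nonneg _
      set p := Real.sqrt (h x - m) with hp
      set q := Real.sqrt (h (T x) - m) with hq
      have hp0 : 0 ≤ p := Real.sqrt_nonneg _
      have hq0 : 0 ≤ q := Real.sqrt_nonneg _
      have hp2 : p ^ 2 = h x - m := Real.sq_sqrt (by linarith [hlow x])
      have hq2 : q ^ 2 = h (T x) - m := Real.sq_sqrt (by linarith [hlow (T x)])
      have hqp : q ≤ p := Real.sqrt_le_sqrt
        (by nlinarith [onestep x, mul_nonneg hcpos.le (sq_nonneg G)])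
      have hdec : q ^ 2 ≤ p ^ 2 - c * G ^ 2 := by
        rw [hp2, hq2]; linarith [onestep x]
      have hpl : Real.sqrt (2 * μ) * p ≤ G := by
        have h1 : (Real.sqrt (2 * μ) * p) ^ 2 ≤ G ^ 2 := by
          rw [mul_pow, hs2, hp2]; linarith [hPL x]
        calc Real.sqrt (2*μ) * p = Real.sqrt ((Real.sqrt (2*μ)*p)^2) :=
              (Real.sqrt_sq (by positivity)).symm
          _ ≤ Real.sqrt (G^2) := Real.sqrt_le_sqrt h1
          _ = G := Real.sqrt_sq hG0
      have hmain : c * Real.sqrt (2 * μ) * G ≤ 2 * (p - q) := by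
        rcases eq_or_lt_of_le hG0 with hGz | hGpos
        · rw [← hGz]; nlinarith [hqp, hcpos.le, hs.le]
        · have hsum : Real.sqrt (2*μ) * (p + q) ≤ 2 * G := by
            nlinarith [hpl, mul_le_mul_of_nonneg_left hqp hs.le]
          have hsub : (0:ℝ) ≤ p - q := by linarith
          nlinarith [mul_le_mul_of_nonneg_left hdec hs.le,
            mul_le_mul_of_nonneg_left hsum hsub, hGpos]
      have heq : η * G = K * (c * Real.sqrt (2 * μ) * G / 2) := by
        have hne : ((1 - L * η / 2) * Real.sqrt (2 * μ)) ≠ 0 := ne_of_gt (by positivity)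
        rw [hK, div_mul_eq_mul_div, eq_div_iff hne, hc]
        ring
      rw [heq]
      exact mul_le_mul_of_nonneg_left (by linarith) hKpos.le
    set seq : ℕ → EuclideanSpace ℝ (Fin d) := fun n => T^[n] w with hseq
    have hseq0 : seq 0 = w := rfl
    have hseqS : ∀ n, seq (n + 1) = T (seq n) := fun n => Function.iterate_succ_apply' T n w
    set q0 : ℝ := 1 - 2 * μ * c with hq0
    have hq00 : 0 ≤ q0 := by nlinarith
    have hq01 : q0 < 1 := by nlinarith
    have decay : ∀ n, h (seq n) - m ≤ q0 ^ n * (h w - m) := by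
      intro n
      induction n with
      | zero => simp [hseq0]
      | succ n ih =>
        have h1 := onestep (seq n)
        have h2 := hPL (seq n)
        have h3 : h (seq (n+1)) - m ≤ q0 * (h (seq n) - m) := by
          rw [hseqS]
          nlinarith [mul_le_mul_of_nonneg_left h2 hcpos.le]
        calc h (seq (n+1)) - m ≤ q0 * (h (seq n) - m) := h3
          _ ≤ q0 * (q0 ^ n * (h w - m)) := mul_le_mul_of_nonneg_left ih hq00
          _ = q0 ^ (n+1) * (h w - m) := by ring
    have distb : ∀ n k, dist (seq n) (seq (n + k)) ≤
        K * (Real.sqrt (h (seq n) - m) - Real.sqrt (h (seq (n + k)) - m)) := by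
      intro n k
      induction k with
      | zero => simp
      | succ k ih =>
        have hstep : dist (seq (n + k)) (seq (n + k + 1)) ≤
            K * (Real.sqrt (h (seq (n+k)) - m) - Real.sqrt (h (seq (n+k+1)) - m)) := by
          rw [hseqS (n+k), dist_eq_norm]
          have harg : seq (n+k) - T (seq (n+k)) = η • g (seq (n+k)) := by
            simp [hT]
          rw [harg, norm_smul, Real.norm_eq_abs, abs_of_pos hη]
          exact stepdist (seq (n+k))
        have htri : dist (seq n) (seq ((n+k)+1)) ≤
            dist (seq n) (seq (n+k)) + dist (seq (n+k)) (seq ((n+k)+1)) :=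
          dist_triangle _ _ _
        show dist (seq n) (seq ((n+k)+1)) ≤
          K * (Real.sqrt (h (seq n) - m) - Real.sqrt (h (seq ((n+k)+1)) - m))
        linarith [ih, hstep, htri]
    have distb2 : ∀ N n, N ≤ n → dist (seq N) (seq n) ≤ K * Real.sqrt (q0 ^ N * (h w - m)) := by
      intro N n hNn
      obtain ⟨k, rfl⟩ := Nat.exists_eq_add_of_le hNn
      have h1 : Real.sqrt (h (seq N) - m) ≤ Real.sqrt (q0^N*(h w - m)) :=
        Real.sqrt_le_sqrt (decay N)
      have h2 : (0:ℝ) ≤ Real.sqrt (h (seq (N+k)) - m) := Real.sqrt_nonneg _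
      calc dist (seq N) (seq (N + k))
          ≤ K * (Real.sqrt (h (seq N) - m) - Real.sqrt (h (seq (N+k)) - m)) := distb N k
        _ ≤ K * Real.sqrt (q0^N * (h w - m)) :=
            mul_le_mul_of_nonneg_left (by linarith) hKpos.le
    have hcauchy : CauchySeq seq := by
      apply cauchySeq_of_le_tendsto_0 (fun N => 2 * (K * Real.sqrt (q0 ^ N * (h w - m))))
      · intro n m' N hn hm'
        calc dist (seq n) (seq m') ≤ dist (seq N) (seq n) + dist (seq N) (seq m') :=
              dist_triangle_left _ _ _
          _ ≤ _ := by linarith [distb2 N n hn, distb2 N m' hm']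
      · have ht1 : Filter.Tendsto (fun N => q0 ^ N * (h w - m)) Filter.atTop (nhds 0) := by
          simpa using (tendsto_pow_atTop_nhds_zero_of_lt_one hq00 hq01).mul_const (h w - m)
        have ht2 := ht1.sqrt
        rw [Real.sqrt_zero] at ht2
        have ht3 := ht2.const_mul (2 * K)
        rw [mul_zero] at ht3
        convert ht3 using 2 with N
        ring
    obtain ⟨wlim, hwlim⟩ := cauchySeq_tendsto_of_complete hcauchy
    have hhlim : h wlim = m := by
      have h1 : Filter.Tendsto (fun n => h (seq n)) Filter.atTop (nhds (h wlim)) :=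
        (hcd.continuous.tendsto wlim).comp hwlim
      have h2 : Filter.Tendsto (fun n => h (seq n)) Filter.atTop (nhds m) := by
        apply tendsto_of_tendsto_of_tendsto_of_le_of_le (g := fun _ => m)
          (h := fun n => m + q0 ^ n * (h w - m)) tendsto_const_nhds ?_
          (fun n => hlow _) (fun n => by dsimp only; linarith [decay n])
        simpa using (tendsto_const_nhds (x := m)).add
          ((tendsto_pow_atTop_nhds_zero_of_lt_one hq00 hq01).mul_const (h w - m))
      exact tendsto_nhds_unique h1 h2
    have hmem : wlim ∈ S := hhlim
    have hdw : dist w wlim ≤ K * Real.sqrt (h w - m) := by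
      apply le_of_tendsto (tendsto_const_nhds.dist hwlim)
      filter_upwards with n
      have hd := distb 0 n
      simp only [Nat.zero_add, hseq0] at hd
      have h2 : (0:ℝ) ≤ Real.sqrt (h (seq n) - m) := Real.sqrt_nonneg _
      have h3 : Real.sqrt (h (seq 0) - m) = Real.sqrt (h w - m) := by rw [hseq0]
      calc dist w (seq n) = dist (seq 0) (seq (0 + n)) := by rw [hseq0, Nat.zero_add]
        _ ≤ K * (Real.sqrt (h (seq 0) - m) - Real.sqrt (h (seq (0+n)) - m)) := distb 0 n
        _ ≤ K * Real.sqrt (h w - m) := by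
            rw [h3]
            exact mul_le_mul_of_nonneg_left (by simp only [Nat.zero_add]; linarith) hKpos.le
    calc Metric.infDist w S ≤ dist w wlim := Metric.infDist_le_dist_of_mem hmem
      _ ≤ K * Real.sqrt (h w - m) := hdw
  -- η → 0
  set D := Metric.infDist w S with hD
  set B := Real.sqrt (h w - m) with hB
  have hD0 : 0 ≤ D := Metric.infDist_nonneg
  have hB0 : 0 ≤ B := Real.sqrt_nonneg _
  have hfin : D * Real.sqrt (2 * μ) ≤ 2 * B := by
    by_contra hcon
    push_neg at hcon
    set r : ℝ := D * Real.sqrt (2 * μ) - 2 * B with hr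
    have hr0 : 0 < r := by linarith
    have hDpos : 0 < D := by nlinarith
    set η : ℝ := min (min (1 / L) (1 / (2 * μ))) (r / (D * L * Real.sqrt (2 * μ))) with hη
    have hηpos : 0 < η := by
      apply lt_min (lt_min (by positivity) (by positivity)) (by positivity)
    have hη1 : L * η ≤ 1 := by
      have : η ≤ 1 / L := le_trans (min_le_left _ _) (min_le_left _ _)
      rw [le_div_iff₀ hL] at this
      linarith [this]
    have hη2 : 2 * μ * η ≤ 1 := by
      have : η ≤ 1 / (2 * μ) := le_trans (min_le_left _ _) (min_le_right _ _)
      rw [le_div_iff₀ (by linarith : (0:ℝ) < 2 * μ)] at this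
      linarith [this]
    have hη3 : D * L * Real.sqrt (2 * μ) * η ≤ r := by
      have : η ≤ r / (D * L * Real.sqrt (2 * μ)) := min_le_right _ _
      rw [le_div_iff₀ (by positivity)] at this
      linarith [this]
    have hkey := key η hηpos hη1 hη2
    have hfac : 0 < 1 - L * η / 2 := by nlinarith
    rw [div_mul_eq_mul_div, le_div_iff₀ (by positivity)] at hkey
    -- hkey : D * ((1 - L*η/2) * sqrt(2μ)) ≤ 2 * B  (roughly)
    nlinarith [hkey, mul_pos hDpos hs]
  have hBsq : B ^ 2 = h w - m := Real.sq_sqrt (by linarith [hlow w])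
  nlinarith [hfin, mul_nonneg hD0 hs.le, sq_nonneg (D * Real.sqrt (2*μ) - 2*B)]
end

section
/- (Danskin-type smoothness of the primal function) If F : ℝ^d × ℝ → ℝ is L-smooth jointly in (w,λ) and F(w,·) is ρ-strongly concave for each w, then the maximizer λ̂(w) = argmax_λ F(w,λ) is (L/ρ)-Lipschitz in w, the primal function R(w) = max_λ F(w,λ) is differentiable with ∇R(w) = ∇_w F(w, λ̂(w)), and ∇R is (L + L²/ρ)-Lipschitz. -/
open InnerProductSpace
set_option maxHeartbeats 1000000

/-- norm distance to an endpoint along a segment is at most the segment length -/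
lemma seg_norm_le {E : Type*} [NormedAddCommGroup E] [NormedSpace ℝ E] {x y z : E}
    (h : z ∈ segment ℝ x y) : ‖z - x‖ ≤ ‖y - x‖ := by
  have h1 := dist_add_dist_of_mem_segment h
  have h2 : dist x z ≤ dist x y := by
    have := dist_nonneg (x := z) (y := y); linarith
  rw [dist_eq_norm, dist_eq_norm] at h2
  simpa [norm_sub_rev] using h2

/-- descent-type estimate from a Lipschitz gradient -/
lemma key_w_est {d : ℕ} (f : EuclideanSpace ℝ (Fin d) → ℝ) (hf : Differentiable ℝ f)
    (L : ℝ) (hL : 0 ≤ L)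
    (hlip : ∀ x y, ‖gradient f x - gradient f y‖ ≤ L * ‖x - y‖)
    (w w' : EuclideanSpace ℝ (Fin d)) :
    |f w' - f w - (inner ℝ (gradient f w) (w' - w) : ℝ)| ≤ L * ‖w' - w‖ * ‖w' - w‖ := by
  have key := (convex_segment w w').norm_image_sub_le_of_norm_hasFDerivWithin_le'
    (f := f) (f' := fun x => toDual ℝ _ (gradient f x))
    (φ := toDual ℝ _ (gradient f w)) (C := L * ‖w' - w‖)
    (fun x _ => (hasGradientAt_iff_hasFDerivAt.mp (hf x).hasGradientAt).hasFDerivWithinAt)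
    (fun x hx => by
      rw [← map_sub, (toDual ℝ _).norm_map]
      exact (hlip x w).trans (by nlinarith [seg_norm_le hx]))
    (left_mem_segment ℝ w w') (right_mem_segment ℝ w w')
  simpa [toDual_apply_apply, Real.norm_eq_abs, mul_comm] using key

/-- Danskin-type smoothness of the primal function: if `F` is jointly `L`-smooth and
`F(w,·)` is `ρ`-strongly concave, then the maximizer `λ̂` is `(L/ρ)`-Lipschitz,
`R(w) = max_λ F(w,λ)` has gradient `∇_w F(w, λ̂(w))`, and this gradient is
`(L + L²/ρ)`-Lipschitz. -/
theorem danskin_smoothness {d : ℕ}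
    (F : EuclideanSpace ℝ (Fin d) → ℝ → ℝ) (L ρ : ℝ) (hL : 0 < L) (hρ : 0 < ρ)
    (hdiffw : ∀ lam, Differentiable ℝ (fun w => F w lam))
    (hdiffl : ∀ w, Differentiable ℝ (F w))
    -- joint L-smoothness of the gradient
    (hsmooth : ∀ w w' lam lam',
      Real.sqrt (‖gradient (fun u => F u lam) w - gradient (fun u => F u lam') w'‖ ^ 2 +
          |deriv (F w) lam - deriv (F w') lam'| ^ 2) ≤
        L * Real.sqrt (‖w - w'‖ ^ 2 + |lam - lam'| ^ 2))
    -- ρ-strong concavity of F(w,·)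
    (hconc : ∀ w, ConcaveOn ℝ Set.univ (fun lam => F w lam + (ρ / 2) * lam ^ 2))
    -- λ̂(w) is the (unique) maximizer
    (lamHat : EuclideanSpace ℝ (Fin d) → ℝ)
    (hmax : ∀ w lam, F w lam ≤ F w (lamHat w))
    (huniq : ∀ w lam, (∀ lam', F w lam' ≤ F w lam) → lam = lamHat w) :
    LipschitzWith (Real.toNNReal (L / ρ)) lamHat ∧
    (∀ w, HasGradientAt (fun w' => ⨆ lam, F w' lam)
      (gradient (fun u => F u (lamHat w)) w) w) ∧
    LipschitzWith (Real.toNNReal (L + L ^ 2 / ρ))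
      (fun w => gradient (fun u => F u (lamHat w)) w) := by
  -- basic sqrt facts
  have sqrt_add_le : ∀ a b : ℝ, 0 ≤ a → 0 ≤ b → Real.sqrt (a^2 + b^2) ≤ a + b := by
    intro a b ha hb
    rw [show a + b = Real.sqrt ((a+b)^2) from (Real.sqrt_sq (by positivity)).symm]
    exact Real.sqrt_le_sqrt (by nlinarith)
  have le_sqrt₁ : ∀ a b : ℝ, 0 ≤ a → a ≤ Real.sqrt (a^2 + b^2) := by
    intro a b ha
    have h := Real.sqrt_le_sqrt (le_add_of_nonneg_right (sq_nonneg b) : a^2 ≤ a^2+b^2)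
    rwa [Real.sqrt_sq ha] at h
  have le_sqrt₂ : ∀ a b : ℝ, 0 ≤ a → a ≤ Real.sqrt (b^2 + a^2) := by
    intro a b ha
    have h := Real.sqrt_le_sqrt (le_add_of_nonneg_left (sq_nonneg b) : a^2 ≤ b^2+a^2)
    rwa [Real.sqrt_sq ha] at h
  -- critical point
  have hcrit : ∀ w, deriv (F w) (lamHat w) = 0 := fun w =>
    IsLocalMax.deriv_eq_zero (Filter.Eventually.of_forall (hmax w))
  -- gradient Lipschitz in w at fixed lam
  have hgradlip : ∀ lam (w w' : EuclideanSpace ℝ (Fin d)),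
      ‖gradient (fun u => F u lam) w - gradient (fun u => F u lam) w'‖ ≤ L * ‖w - w'‖ := by
    intro lam w w'
    have h := hsmooth w w' lam lam
    have h2 : Real.sqrt (‖w - w'‖^2 + |lam - lam|^2) = ‖w - w'‖ := by
      simp [Real.sqrt_sq (norm_nonneg _)]
    rw [h2] at h
    exact le_trans (le_sqrt₁ _ _ (norm_nonneg _)) h
  -- deriv Lipschitz in w at fixed lam
  have hderlipw : ∀ lam (w w' : EuclideanSpace ℝ (Fin d)),
      |deriv (F w) lam - deriv (F w') lam| ≤ L * ‖w - w'‖ := by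
    intro lam w w'
    have h := hsmooth w w' lam lam
    have h2 : Real.sqrt (‖w - w'‖^2 + |lam - lam|^2) = ‖w - w'‖ := by
      simp [Real.sqrt_sq (norm_nonneg _)]
    rw [h2] at h
    exact le_trans (le_sqrt₂ _ _ (abs_nonneg _)) h
  -- deriv Lipschitz in lam at fixed w
  have hderlipl : ∀ (w : EuclideanSpace ℝ (Fin d)) (a b : ℝ),
      |deriv (F w) a - deriv (F w) b| ≤ L * |a - b| := by
    intro w a b
    have h := hsmooth w w a b
    have h2 : Real.sqrt (‖w - w‖^2 + |a - b|^2) = |a - b| := by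
      simp [Real.sqrt_sq_eq_abs]
    rw [h2] at h
    exact le_trans (le_sqrt₂ _ _ (abs_nonneg _)) h
  -- strong concavity : gradient dominates distance to maximizer
  have hstrong : ∀ (w : EuclideanSpace ℝ (Fin d)) (lam : ℝ),
      ρ * |lam - lamHat w| ≤ |deriv (F w) lam| := by
    intro w lam
    have hG : ∀ t : ℝ, HasDerivAt (fun s => F w s + (ρ/2) * s^2) (deriv (F w) t + ρ * t) t := by
      intro t
      have h2 : HasDerivAt (fun s : ℝ => (ρ/2) * s^2) (ρ * t) t := by
        have := (hasDerivAt_pow 2 t).const_mul (ρ/2)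
        exact this.congr_deriv (by ring)
      exact ((hdiffl w) t).hasDerivAt.add h2
    have hanti : AntitoneOn (deriv (fun s => F w s + (ρ/2) * s^2)) Set.univ :=
      (hconc w).antitoneOn_deriv (fun x _ => (hG x).differentiableAt)
    rcases le_total (lamHat w) lam with h | h
    · have h1 := hanti (Set.mem_univ (lamHat w)) (Set.mem_univ lam) h
      rw [(hG lam).deriv, (hG (lamHat w)).deriv, hcrit w] at h1
      have habs : |lam - lamHat w| = lam - lamHat w := abs_of_nonneg (by linarith)
      rw [habs]
      have h3 : deriv (F w) lam ≤ -(ρ * (lam - lamHat w)) := by linarith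
      calc ρ * (lam - lamHat w) ≤ -(deriv (F w) lam) := by linarith
        _ ≤ |deriv (F w) lam| := neg_le_abs _
    · have h1 := hanti (Set.mem_univ lam) (Set.mem_univ (lamHat w)) h
      rw [(hG lam).deriv, (hG (lamHat w)).deriv, hcrit w] at h1
      have habs : |lam - lamHat w| = lamHat w - lam := by
        rw [abs_of_nonpos (by linarith)]; ring
      rw [habs]
      calc ρ * (lamHat w - lam) ≤ deriv (F w) lam := by linarith
        _ ≤ |deriv (F w) lam| := le_abs_self _
  -- Lipschitz continuity of lamHat
  have hlamlip : ∀ w w' : EuclideanSpace ℝ (Fin d),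
      |lamHat w - lamHat w'| ≤ (L/ρ) * ‖w - w'‖ := by
    intro w w'
    have h1 := hstrong w' (lamHat w)
    have h2 : |deriv (F w') (lamHat w)| ≤ L * ‖w' - w‖ := by
      have h3 := hderlipw (lamHat w) w' w
      rwa [hcrit w, sub_zero] at h3
    rw [norm_sub_rev] at h2
    rw [div_mul_eq_mul_div, le_div_iff₀ hρ, mul_comm]
    exact le_trans (by exact h1) (le_trans h2 (le_refl _))
  have hLρ : (0:ℝ) ≤ L / ρ := le_of_lt (div_pos hL hρ)
  constructor
  · -- Lipschitz of lamHat
    apply LipschitzWith.of_dist_le_mul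
    intro x y
    rw [Real.coe_toNNReal _ hLρ, Real.dist_eq, dist_eq_norm]
    exact hlamlip x y
  constructor
  · -- gradient of the primal function
    intro w
    have hRval : ∀ u : EuclideanSpace ℝ (Fin d), (⨆ lam, F u lam) = F u (lamHat u) := by
      intro u
      refine le_antisymm (ciSup_le (hmax u)) (le_ciSup ⟨F u (lamHat u), ?_⟩ (lamHat u))
      rintro y ⟨lam, rfl⟩; exact hmax u lam
    -- 1-d estimate near the maximizer of F w'
    have hkeyl : ∀ (w' : EuclideanSpace ℝ (Fin d)) (lam : ℝ),
        |F w' (lamHat w') - F w' lam| ≤ L * |lamHat w' - lam| * |lamHat w' - lam| := by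
      intro w' lam
      have key := (convex_segment lam (lamHat w')).norm_image_sub_le_of_norm_hasDerivWithin_le
        (f := F w') (f' := fun t => deriv (F w') t) (C := L * |lamHat w' - lam|)
        (fun t _ => ((hdiffl w') t).hasDerivAt.hasDerivWithinAt)
        (fun t ht => by
          have h1 := hderlipl w' t (lamHat w')
          rw [hcrit w', sub_zero] at h1
          have h2 : ‖t - lam‖ ≤ ‖lamHat w' - lam‖ := seg_norm_le ht
          rw [Real.norm_eq_abs, Real.norm_eq_abs] at h2
          rw [Real.norm_eq_abs]
          calc |deriv (F w') t| ≤ L * |t - lamHat w'| := h1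
            _ ≤ L * |lamHat w' - lam| := by
                apply mul_le_mul_of_nonneg_left _ hL.le
                have := abs_sub_abs_le_abs_sub t (lamHat w')
                have h3 : |t - lamHat w'| ≤ |t - lam| + |lam - lamHat w'| := abs_sub_le _ _ _
                rw [abs_sub_comm lam (lamHat w')] at h3
                obtain ⟨a, b, ha, hb, hab, rfl⟩ := ht
                have heq : a • lam + b • (lamHat w') - lamHat w' = a * (lam - lamHat w') := by
                  have : a = 1 - b := by linarith
                  subst this; simp [smul_eq_mul]; ring
                rw [heq, abs_mul, abs_of_nonneg ha, abs_sub_comm]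
                nlinarith [abs_nonneg (lamHat w' - lam)])
        (left_mem_segment ℝ lam (lamHat w')) (right_mem_segment ℝ lam (lamHat w'))
      simpa [Real.norm_eq_abs, mul_comm] using key
    rw [hasGradientAt_iff_isLittleO]
    set g := gradient (fun u => F u (lamHat w)) w with hg
    set C := L + L * (L/ρ) * (L/ρ) with hC
    have hCpos : (0:ℝ) < C := by positivity
    have key : ∀ w' : EuclideanSpace ℝ (Fin d),
        |(⨆ lam, F w' lam) - (⨆ lam, F w lam) - (inner ℝ g (w' - w) : ℝ)| ≤
          C * ‖w' - w‖ * ‖w' - w‖ := by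
      intro w'
      rw [hRval w, hRval w']
      have h1 := key_w_est (fun u => F u (lamHat w)) (hdiffw (lamHat w)) L hL.le
        (hgradlip (lamHat w)) w w'
      have h2 : F w' (lamHat w) ≤ F w' (lamHat w') := hmax w' (lamHat w)
      have h3 := hkeyl w' (lamHat w)
      have h4 : |lamHat w' - lamHat w| ≤ (L/ρ) * ‖w' - w‖ := by
        have := hlamlip w' w; assumption
      have h5 : |lamHat w' - lamHat w| * |lamHat w' - lamHat w| ≤
          ((L/ρ) * ‖w' - w‖) * ((L/ρ) * ‖w' - w‖) :=
        mul_self_le_mul_self (abs_nonneg _) h4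
      rw [← hg] at h1
      rw [abs_le] at h1 h3 ⊢
      obtain ⟨h1l, h1r⟩ := h1
      obtain ⟨h3l, h3r⟩ := h3
      have h6 := mul_le_mul_of_nonneg_left h5 hL.le
      have h7 : 0 ≤ L * (L/ρ) * (L/ρ) * (‖w' - w‖ * ‖w' - w‖) := by positivity
      rw [hC]
      constructor
      · nlinarith [norm_nonneg (w' - w)]
      · nlinarith [norm_nonneg (w' - w)]
    rw [Asymptotics.isLittleO_iff]
    intro ε hε
    filter_upwards [Metric.ball_mem_nhds w (show (0:ℝ) < ε / C by positivity)] with x hx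
    rw [Metric.mem_ball, dist_eq_norm] at hx
    have hx' : ‖x - w‖ * C ≤ ε := (le_div_iff₀ hCpos).1 hx.le
    calc ‖(⨆ lam, F x lam) - (⨆ lam, F w lam) - (inner ℝ g (x - w) : ℝ)‖
        = |(⨆ lam, F x lam) - (⨆ lam, F w lam) - (inner ℝ g (x - w) : ℝ)| := Real.norm_eq_abs _
      _ ≤ C * ‖x - w‖ * ‖x - w‖ := key x
      _ ≤ ε * ‖x - w‖ := by nlinarith [norm_nonneg (x - w)]
  · -- Lipschitz of the gradient map
    apply LipschitzWith.of_dist_le_mul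
    intro x y
    have hnn : (0:ℝ) ≤ L + L^2/ρ := by positivity
    rw [Real.coe_toNNReal _ hnn, dist_eq_norm, dist_eq_norm]
    have h := hsmooth x y (lamHat x) (lamHat y)
    have h1 : ‖gradient (fun u => F u (lamHat x)) x - gradient (fun u => F u (lamHat y)) y‖ ≤
        L * Real.sqrt (‖x - y‖^2 + |lamHat x - lamHat y|^2) :=
      le_trans (le_sqrt₁ _ _ (norm_nonneg _)) h
    have h2 : Real.sqrt (‖x - y‖^2 + |lamHat x - lamHat y|^2) ≤
        ‖x - y‖ + (L/ρ) * ‖x - y‖ := by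
      refine le_trans (sqrt_add_le _ _ (norm_nonneg _) (abs_nonneg _)) ?_
      have := hlamlip x y
      linarith
    calc ‖gradient (fun u => F u (lamHat x)) x - gradient (fun u => F u (lamHat y)) y‖
        ≤ L * (‖x - y‖ + (L/ρ) * ‖x - y‖) :=
          le_trans h1 (mul_le_mul_of_nonneg_left h2 hL.le)
      _ = (L + L^2/ρ) * ‖x - y‖ := by field_simp
end
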